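/- Let n ≥ 2 and α ∈ (0, 1). For t ∈ (0, e^{−1}) let g_α(t) = t·(−log t)^α − t, and define v_α(x) = g_α(xₙ)·(|x′|² − 1) for x = (x′, xₙ) ∈ ℝⁿ with 0 < xₙ < e^{−1}. Then for every such x, det D²v_α(x) ≤ 2ⁿ · α · xₙ^{n−2} · (−log xₙ)^{nα−1}. -/

import Mathlib

open Metric MeasureTheory Real Finset

/-- The Hessian matrix of `u : ℝⁿ → ℝ` at `x`, with entries the second partial
derivatives `∂²u/∂xᵢ∂xⱼ` computed via iterated Fréchet derivatives. -/
noncomputable def hessianMatrix {n : ℕ} (u : EuclideanSpace ℝ (Fin n) → ℝ)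
    (x : EuclideanSpace ℝ (Fin n)) : Matrix (Fin n) (Fin n) ℝ :=
  Matrix.of fun i j =>
    fderiv ℝ (fun y => fderiv ℝ u y (EuclideanSpace.single j 1)) x (EuclideanSpace.single i 1)

/-- The determinant of the Hessian matrix, `det D²u(x)`. -/
noncomputable def hessianDet {n : ℕ} (u : EuclideanSpace ℝ (Fin n) → ℝ)
    (x : EuclideanSpace ℝ (Fin n)) : ℝ := (hessianMatrix u x).det


noncomputable def gg (α t : ℝ) : ℝ := t * (-Real.log t) ^ α - t
noncomputable def gg1 (α t : ℝ) : ℝ :=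
  (-Real.log t) ^ α - α * (-Real.log t) ^ (α - 1) - 1
noncomputable def gg2 (α t : ℝ) : ℝ :=
  (-α / t) * (-Real.log t) ^ (α - 1) + (α * (α - 1) / t) * (-Real.log t) ^ (α - 2)

lemma negLog_pos {t : ℝ} (ht0 : 0 < t) (ht1 : t < 1) : 0 < -Real.log t := by
  simpa using Real.log_neg ht0 ht1

lemma hasDerivAt_negLog_rpow {t β : ℝ} (ht0 : 0 < t) (ht1 : t < 1) :
    HasDerivAt (fun s => (-Real.log s) ^ β) (-t⁻¹ * β * (-Real.log t) ^ (β - 1)) t := by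
  have h1 : HasDerivAt (fun s => -Real.log s) (-t⁻¹) t :=
    (Real.hasDerivAt_log ht0.ne').neg
  exact h1.rpow_const (Or.inl (negLog_pos ht0 ht1).ne')

lemma hasDerivAt_gg {α t : ℝ} (ht0 : 0 < t) (ht1 : t < 1) :
    HasDerivAt (gg α) (gg1 α t) t := by
  have h2 := hasDerivAt_negLog_rpow (β := α) ht0 ht1
  have h3 : HasDerivAt (fun s : ℝ => s * (-Real.log s) ^ α - s)
      (1 * (-Real.log t) ^ α + t * (-t⁻¹ * α * (-Real.log t) ^ (α - 1)) - 1) t :=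
    ((hasDerivAt_id t).mul h2).sub (hasDerivAt_id t)
  have : (1 : ℝ) * (-Real.log t) ^ α + t * (-t⁻¹ * α * (-Real.log t) ^ (α - 1)) - 1
      = gg1 α t := by
    unfold gg1
    field_simp [gg1]
    ring
  rw [this] at h3
  exact h3

lemma hasDerivAt_gg1 {α t : ℝ} (ht0 : 0 < t) (ht1 : t < 1) :
    HasDerivAt (gg1 α) (gg2 α t) t := by
  have h2 := hasDerivAt_negLog_rpow (β := α) ht0 ht1
  have h3 := hasDerivAt_negLog_rpow (β := α - 1) ht0 ht1
  have h4 : HasDerivAt (gg1 α)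
      (-t⁻¹ * α * (-Real.log t) ^ (α - 1) - α * (-t⁻¹ * (α-1) * (-Real.log t) ^ (α - 1 - 1))) t :=
    (h2.sub (h3.const_mul α)).sub_const 1
  have : -t⁻¹ * α * (-Real.log t) ^ (α - 1) - α * (-t⁻¹ * (α-1) * (-Real.log t) ^ (α - 1 - 1))
      = gg2 α t := by
    have : α - 1 - 1 = α - 2 := by ring
    rw [this]
    unfold gg2
    field_simp [gg2]
    ring
  rw [this] at h4
  exact h4


lemma det_aux {n : ℕ} (hn : 2 ≤ n) (m : Fin n) (hm : ∀ i, i ≤ m)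
    (a c : ℝ) (ha : a ≠ 0) (b : Fin n → ℝ)
    (M : Matrix (Fin n) (Fin n) ℝ)
    (hM : ∀ i j, M i j = if i = m then (if j = m then c else b j)
        else if j = m then b i else if i = j then a else 0) :
    M.det = a ^ (n - 2) * (a * c - ∑ i ∈ Finset.univ.erase m, b i ^ 2) := by
  set s : ℝ := ∑ i ∈ Finset.univ.erase m, b i ^ 2 with hs
  set U : Matrix (Fin n) (Fin n) ℝ :=
    Matrix.of (fun i j => if i = j then 1 else if j = m ∧ i ≠ m then -(b i) / a else 0) with hU
  have hUdet : U.det = 1 := by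
    have htri : U.BlockTriangular id := by
      intro i j hij
      simp only [hU, Matrix.of_apply]
      rw [if_neg, if_neg]
      · rintro ⟨rfl, -⟩; exact absurd (hm i) (not_le.mpr hij)
      · rintro rfl; exact lt_irrefl _ hij
    rw [Matrix.det_of_upperTriangular htri]
    have h1 : ∀ i : Fin n, U i i = 1 := fun i => by simp [hU]
    simp [h1]
  have hcol : ∀ i j, j ≠ m → (M * U) i j = M i j := by
    intro i j hj
    rw [Matrix.mul_apply]
    have : ∀ k, M i k * U k j = if k = j then M i j else 0 := by
      intro k
      by_cases hk : k = j
      · subst hk; simp [hU]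
      · simp [hU, hk, fun h : j = m => hj h]
    rw [Finset.sum_congr rfl (fun k _ => this k), Finset.sum_ite_eq' univ j]
    simp
  have hcolm : ∀ i, (M * U) i m = if i = m then c - s / a else 0 := by
    intro i
    rw [Matrix.mul_apply]
    have hsplit : ∀ k, M i k * U k m =
        if k = m then M i m else M i k * (-(b k) / a) := by
      intro k
      by_cases hk : k = m
      · subst hk; simp [hU]
      · simp [hU, hk]
    rw [Finset.sum_congr rfl (fun k _ => hsplit k),
      ← Finset.add_sum_erase univ _ (Finset.mem_univ m)]
    simp only [if_pos rfl]
    rw [Finset.sum_congr rfl (fun k hk => if_neg (Finset.ne_of_mem_erase hk))]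
    by_cases him : i = m
    · have hterm : ∀ k ∈ univ.erase m, M i k * (-(b k) / a) = -(b k ^2 / a) := by
        intro k hk
        rw [hM, if_pos him, if_neg (Finset.ne_of_mem_erase hk)]
        ring
      rw [Finset.sum_congr rfl hterm, hM, if_pos him, if_pos rfl, if_pos him,
        Finset.sum_neg_distrib, ← Finset.sum_div]
      norm_num
      rw [hs, Finset.sum_erase_eq_sub (Finset.mem_univ m)]
      ring
    · have hterm : ∀ k ∈ univ.erase m, M i k * (-(b k) / a) =
          if k = i then -(b i) else 0 := by
        intro k hk
        rw [hM, if_neg him, if_neg (Finset.ne_of_mem_erase hk)]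
        by_cases hki : k = i
        · rw [if_pos hki, if_pos (hki ▸ rfl : i = k), hki, mul_comm,
            div_mul_cancel₀ _ ha]
        · rw [if_neg (fun h : i = k => hki h.symm), if_neg hki, zero_mul]
      rw [Finset.sum_congr rfl hterm, Finset.sum_ite_eq' (univ.erase m) i,
        if_pos (Finset.mem_erase.mpr ⟨him, Finset.mem_univ i⟩),
        hM, if_neg him, if_pos rfl, if_neg him]
      norm_num
  have htri2 : (M * U).BlockTriangular OrderDual.toDual := by
    intro i j hij
    have hij' : i < j := hij
    have hjm : i ≠ m := fun h => absurd (hm j) (not_le.mpr (h ▸ hij'))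
    by_cases hj : j = m
    · rw [hj, hcolm, if_neg hjm]
    · rw [hcol i j hj, hM, if_neg hjm, if_neg hj, if_neg (ne_of_lt hij')]
  have hdet2 : (M * U).det = (c - s / a) * a ^ (n - 1) := by
    rw [Matrix.det_of_lowerTriangular _ htri2,
      ← Finset.mul_prod_erase univ _ (Finset.mem_univ m), hcolm, if_pos rfl]
    congr 1
    rw [Finset.prod_congr rfl (fun i hi => by
      rw [hcol i i (Finset.ne_of_mem_erase hi), hM,
        if_neg (Finset.ne_of_mem_erase hi), if_neg (Finset.ne_of_mem_erase hi), if_pos rfl]),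
      Finset.prod_const, Finset.card_erase_of_mem (Finset.mem_univ m)]
    simp
  have : M.det * U.det = (c - s / a) * a ^ (n - 1) := by
    rw [← Matrix.det_mul]; exact hdet2
  rw [hUdet, mul_one] at this
  rw [this]
  have hn1 : n - 1 = (n - 2) + 1 := by omega
  rw [hn1, pow_succ]
  field_simp

section
variable {n : ℕ} (m : Fin n)

noncomputable abbrev P (i : Fin n) : EuclideanSpace ℝ (Fin n) →L[ℝ] ℝ := EuclideanSpace.proj i

noncomputable def DQ (y : EuclideanSpace ℝ (Fin n)) : EuclideanSpace ℝ (Fin n) →L[ℝ] ℝ :=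
  ∑ i ∈ Finset.univ.erase m, (2 * y i) • P i

lemma hQ (y : EuclideanSpace ℝ (Fin n)) :
    HasFDerivAt (fun z : EuclideanSpace ℝ (Fin n) => (∑ i ∈ Finset.univ.erase m, z i ^ 2) - 1)
      (DQ m y) y := by
  apply HasFDerivAt.sub_const
  apply HasFDerivAt.fun_sum
  intro i _
  have h1 : HasFDerivAt (fun z : EuclideanSpace ℝ (Fin n) => (P i z) ^ 2)
      ((2 * (P i y) ^ 1) • P i) y :=
    (hasDerivAt_pow 2 (P i y)).comp_hasFDerivAt y (P i).hasFDerivAt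
  simpa using h1

lemma hG {α : ℝ} (y : EuclideanSpace ℝ (Fin n)) (h0 : 0 < y m) (h1 : y m < 1) :
    HasFDerivAt (fun z : EuclideanSpace ℝ (Fin n) => gg α (z m)) (gg1 α (y m) • P m) y :=
  by have h := (hasDerivAt_gg (α := α) h0 h1).comp_hasFDerivAt y (P m).hasFDerivAt; exact h

lemma hG1 {α : ℝ} (y : EuclideanSpace ℝ (Fin n)) (h0 : 0 < y m) (h1 : y m < 1) :
    HasFDerivAt (fun z : EuclideanSpace ℝ (Fin n) => gg1 α (z m)) (gg2 α (y m) • P m) y :=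
  by have h := (hasDerivAt_gg1 (α := α) h0 h1).comp_hasFDerivAt y (P m).hasFDerivAt; exact h

lemma hV {α : ℝ} (y : EuclideanSpace ℝ (Fin n)) (h0 : 0 < y m) (h1 : y m < 1) :
    HasFDerivAt (fun z : EuclideanSpace ℝ (Fin n) =>
        gg α (z m) * ((∑ i ∈ Finset.univ.erase m, z i ^ 2) - 1))
      (gg α (y m) • DQ m y +
        ((∑ i ∈ Finset.univ.erase m, y i ^ 2) - 1) • (gg1 α (y m) • P m)) y :=
  (hG m y h0 h1).mul (hQ m y)

lemma DQ_apply (y : EuclideanSpace ℝ (Fin n)) (j : Fin n) :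
    DQ m y (EuclideanSpace.single j 1) = if j ∈ Finset.univ.erase m then 2 * y j else 0 := by
  rw [DQ, ContinuousLinearMap.sum_apply]
  have : ∀ i ∈ Finset.univ.erase m, ((2 * y i) • P i) (EuclideanSpace.single j 1)
      = if i = j then 2 * y j else 0 := by
    intro i _
    have hp : P i (EuclideanSpace.single j 1) = if i = j then 1 else 0 := by
      show EuclideanSpace.single j (1:ℝ) i = _
      rw [EuclideanSpace.single_apply]
    rw [ContinuousLinearMap.smul_apply, hp]
    by_cases h : i = j
    · subst h; simp
    · simp [h]
  rw [Finset.sum_congr rfl this, Finset.sum_ite_eq' (Finset.univ.erase m) j]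

lemma P_single (i j : Fin n) :
    P i (EuclideanSpace.single j (1:ℝ)) = if i = j then 1 else 0 := by
  show EuclideanSpace.single j (1:ℝ) i = _
  rw [EuclideanSpace.single_apply]

end

section
variable {n : ℕ} (m : Fin n) (α : ℝ)

noncomputable def V : EuclideanSpace ℝ (Fin n) → ℝ :=
  fun z => gg α (z m) * ((∑ i ∈ Finset.univ.erase m, z i ^ 2) - 1)

lemma fderiv_V_apply (y : EuclideanSpace ℝ (Fin n)) (h0 : 0 < y m) (h1 : y m < 1) (j : Fin n) :
    fderiv ℝ (V m α) y (EuclideanSpace.single j 1) =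
      if j = m then ((∑ i ∈ Finset.univ.erase m, y i ^ 2) - 1) * gg1 α (y m)
      else gg α (y m) * (2 * y j) := by
  rw [show V m α = fun z : EuclideanSpace ℝ (Fin n) =>
      gg α (z m) * ((∑ i ∈ Finset.univ.erase m, z i ^ 2) - 1) from rfl,
    (hV m y h0 h1).fderiv]
  rw [ContinuousLinearMap.add_apply, ContinuousLinearMap.smul_apply,
    ContinuousLinearMap.smul_apply, ContinuousLinearMap.smul_apply, DQ_apply, P_single]
  by_cases hj : j = m
  · subst hj
    simp [Finset.notMem_erase]
  · simp [hj, (show m ≠ j from fun h => hj h.symm), Finset.mem_erase, smul_eq_mul]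

lemma hess_entry (x : EuclideanSpace ℝ (Fin n)) (h0 : 0 < x m) (h1 : x m < 1) (i j : Fin n) :
    fderiv ℝ (fun y => fderiv ℝ (V m α) y (EuclideanSpace.single j 1)) x
        (EuclideanSpace.single i 1) =
      if i = m then
        (if j = m then ((∑ k ∈ Finset.univ.erase m, x k ^ 2) - 1) * gg2 α (x m)
         else 2 * x j * gg1 α (x m))
      else if j = m then 2 * x i * gg1 α (x m)
      else if i = j then 2 * gg α (x m) else 0 := by
  have hmem : {y : EuclideanSpace ℝ (Fin n) | 0 < y m ∧ y m < 1} ∈ nhds x := by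
    have hop : IsOpen {y : EuclideanSpace ℝ (Fin n) | 0 < y m ∧ y m < 1} := by
      have he : {y : EuclideanSpace ℝ (Fin n) | 0 < y m ∧ y m < 1}
          = (P m) ⁻¹' (Set.Ioo 0 1) := rfl
      rw [he]; exact isOpen_Ioo.preimage (P m).continuous
    exact hop.mem_nhds ⟨h0, h1⟩
  by_cases hj : j = m
  · rw [hj]
    have hEq : (fun y : EuclideanSpace ℝ (Fin n) =>
        ((∑ k ∈ Finset.univ.erase m, y k ^ 2) - 1) * gg1 α (y m)) =ᶠ[nhds x]
        (fun y => fderiv ℝ (V m α) y (EuclideanSpace.single m 1)) := by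
      refine Filter.eventuallyEq_of_mem hmem (fun y hy => ?_)
      rw [fderiv_V_apply m α y hy.1 hy.2, if_pos rfl]
    rw [← hEq.fderiv_eq, ((hQ m x).fun_mul (hG1 m x h0 h1)).fderiv]
    rw [ContinuousLinearMap.add_apply, ContinuousLinearMap.smul_apply,
      ContinuousLinearMap.smul_apply, ContinuousLinearMap.smul_apply, DQ_apply, P_single]
    by_cases hi : i = m
    · simp [hi, Finset.notMem_erase, smul_eq_mul]
    · simp only [hi, if_false, Finset.mem_erase, Finset.mem_univ, and_true, if_pos rfl,
        if_pos (⟨hi, trivial⟩ : i ≠ m ∧ True), smul_eq_mul]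
      simp [hi, (show ¬ m = i from fun h => hi h.symm)]
      ring
  · have hEq : (fun y : EuclideanSpace ℝ (Fin n) => gg α (y m) * (2 * y j)) =ᶠ[nhds x]
        (fun y => fderiv ℝ (V m α) y (EuclideanSpace.single j 1)) := by
      refine Filter.eventuallyEq_of_mem hmem (fun y hy => ?_)
      rw [fderiv_V_apply m α y hy.1 hy.2, if_neg hj]
    have hD : HasFDerivAt (fun y : EuclideanSpace ℝ (Fin n) => 2 * y j)
        ((2:ℝ) • P j) x := (P j).hasFDerivAt.const_mul (2:ℝ)
    rw [← hEq.fderiv_eq, ((hG m x h0 h1).fun_mul hD).fderiv]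
    simp only [ContinuousLinearMap.add_apply, ContinuousLinearMap.smul_apply]
    rw [P_single, P_single]
    have hmi : ¬ m = i ∨ ¬ i = m → True := fun _ => trivial
    by_cases hi : i = m
    · have hij : ¬ i = j := fun h => hj (h ▸ hi)
      have hji : ¬ j = i := fun h => hij h.symm
      simp only [hi, hij, hji, if_false, if_pos rfl, if_neg hj, smul_eq_mul]
      norm_num
    · by_cases hij : i = j
      · have hmj : ¬ m = j := fun h => hj h.symm
        simp only [hi, hij, if_false, if_pos rfl, if_neg hj, if_neg hmj, smul_eq_mul]
        norm_num
        ring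
      · have hji : ¬ j = i := fun h => hij h.symm
        have hmi : ¬ m = i := fun h => hi h.symm
        simp only [hi, hij, hji, hmi, if_false, if_neg hj, smul_eq_mul]
        norm_num

end

lemma final_ineq {n : ℕ} (hn : 2 ≤ n) {α t : ℝ} (hα0 : 0 < α) (hα1 : α < 1)
    (ht0 : 0 < t) (ht1 : t < Real.exp (-1)) (S : ℝ) (hS : 0 ≤ S) :
    (2 * gg α t) ^ (n - 2) *
        ((2 * gg α t) * ((S - 1) * gg2 α t) - 4 * gg1 α t ^ 2 * S)
      ≤ 2 ^ n * α * t ^ (n - 2) * (-Real.log t) ^ ((n : ℝ) * α - 1) := by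
  set L : ℝ := -Real.log t with hLdef
  have hL : 1 < L := by
    have h := Real.log_lt_log ht0 ht1
    rw [Real.log_exp] at h
    simp only [hLdef]; linarith
  have hL0 : (0:ℝ) < L := by linarith
  have hA : (0:ℝ) < L ^ (α - 1) := Real.rpow_pos_of_pos hL0 _
  have hB : (0:ℝ) < L ^ (α - 2) := Real.rpow_pos_of_pos hL0 _
  have hAB : L ^ (α - 1) = L ^ (α - 2) * L := by
    rw [← Real.rpow_add_one hL0.ne' (α - 2)]
    congr 1
    ring
  have hLα : 1 < L ^ α := by
    rw [one_lt_rpow_iff_of_pos hL0]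
    exact Or.inl ⟨hL, hα0⟩
  have hLαpos : (0:ℝ) < L ^ α := by linarith
  have hg : 0 < gg α t := by
    rw [gg]; nlinarith
  have hgle : gg α t ≤ t * L ^ α := by
    rw [gg]; linarith
  have hg2 : gg2 α t ≤ 0 := by
    rw [gg2]
    have h1 : -α / t ≤ 0 := div_nonpos_of_nonpos_of_nonneg (by linarith) ht0.le
    have h2 : α * (α - 1) / t ≤ 0 :=
      div_nonpos_of_nonpos_of_nonneg (by nlinarith) ht0.le
    exact add_nonpos (mul_nonpos_of_nonpos_of_nonneg h1 hA.le)
      (mul_nonpos_of_nonpos_of_nonneg h2 hB.le)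
  have hg2b : t * (-gg2 α t) ≤ 2 * α * L ^ (α - 1) := by
    rw [gg2]
    have hexp : t * (-((-α / t) * L ^ (α - 1) + (α * (α - 1) / t) * L ^ (α - 2)))
        = α * L ^ (α - 1) + α * (1 - α) * L ^ (α - 2) := by
      field_simp
      ring
    rw [hexp, hAB]
    nlinarith [mul_pos hα0 hB]
  -- inner bound
  have hinner : (2 * gg α t) * ((S - 1) * gg2 α t) - 4 * gg1 α t ^ 2 * S
      ≤ 2 * gg α t * (-gg2 α t) := by
    nlinarith [mul_nonneg hS (sq_nonneg (gg1 α t)),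
      mul_nonneg (mul_nonneg hS (by linarith : (0:ℝ) ≤ 2 * gg α t))
        (neg_nonneg.mpr hg2)]
  have hinner2 : 2 * gg α t * (-gg2 α t) ≤ 2 * L ^ α * (2 * α * L ^ (α - 1)) := by
    have s1 : 2 * gg α t * (-gg2 α t) ≤ 2 * (t * L ^ α) * (-gg2 α t) := by
      have := neg_nonneg.mpr hg2
      nlinarith
    have s2 : 2 * (t * L ^ α) * (-gg2 α t) = 2 * L ^ α * (t * (-gg2 α t)) := by ring
    have s3 : 2 * L ^ α * (t * (-gg2 α t)) ≤ 2 * L ^ α * (2 * α * L ^ (α - 1)) := by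
      apply mul_le_mul_of_nonneg_left hg2b (by positivity)
    linarith
  have hRnn : (0:ℝ) ≤ 2 * L ^ α * (2 * α * L ^ (α - 1)) := by positivity
  have houter : (2 * gg α t) ^ (n - 2) ≤ (2 * (t * L ^ α)) ^ (n - 2) :=
    pow_le_pow_left₀ (by linarith) (by linarith) _
  have step : (2 * gg α t) ^ (n - 2) *
        ((2 * gg α t) * ((S - 1) * gg2 α t) - 4 * gg1 α t ^ 2 * S)
      ≤ (2 * (t * L ^ α)) ^ (n - 2) * (2 * L ^ α * (2 * α * L ^ (α - 1))) := by
    calc (2 * gg α t) ^ (n - 2) *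
          ((2 * gg α t) * ((S - 1) * gg2 α t) - 4 * gg1 α t ^ 2 * S)
        ≤ (2 * gg α t) ^ (n - 2) * (2 * L ^ α * (2 * α * L ^ (α - 1))) := by
          apply mul_le_mul_of_nonneg_left (le_trans hinner hinner2) (by positivity)
      _ ≤ (2 * (t * L ^ α)) ^ (n - 2) * (2 * L ^ α * (2 * α * L ^ (α - 1))) :=
          mul_le_mul_of_nonneg_right houter hRnn
  refine le_trans step (le_of_eq ?_)
  -- now the algebraic identity
  have e0 : (2 * (t * L ^ α)) ^ (n - 2) = 2 ^ (n-2) * t ^ (n-2) * (L ^ α) ^ (n-2) := by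
    rw [mul_pow, mul_pow]; ring
  have e1 : ((L ^ α) ^ (n - 2) : ℝ) = L ^ (α * ((n:ℝ) - 2)) := by
    rw [← Real.rpow_natCast (L ^ α) (n - 2), ← Real.rpow_mul hL0.le]
    congr 1
    rw [Nat.cast_sub hn]
    norm_num
  have e2 : L ^ (α * ((n:ℝ) - 2)) * (L ^ α * L ^ (α - 1)) = L ^ ((n:ℝ) * α - 1) := by
    rw [← Real.rpow_add hL0, ← Real.rpow_add hL0]
    congr 1
    ring
  have e3 : (2:ℝ) ^ (n - 2) * 4 = 2 ^ n := by
    have : n = (n - 2) + 2 := by omega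
    rw [this]
    rw [pow_add]
    norm_num
  calc (2 * (t * L ^ α)) ^ (n - 2) * (2 * L ^ α * (2 * α * L ^ (α - 1)))
      = (2 ^ (n-2) * 4) * α * t ^ (n-2) * (L ^ (α * ((n:ℝ) - 2)) * (L ^ α * L ^ (α - 1))) := by
        rw [e0, e1]; ring
    _ = 2 ^ n * α * t ^ (n - 2) * L ^ ((n:ℝ) * α - 1) := by rw [e2, e3]


/-- The supersolution `v_α(x) = g_α(xₙ)(|x'|² - 1)` with
`g_α(t) = t(-log t)^α - t` satisfies `det D²v_α ≤ 2ⁿ α xₙ^{n-2} (-log xₙ)^{nα-1}`. -/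
theorem stmt_17 (n : ℕ) (hn : 2 ≤ n) (α : ℝ) (hα0 : 0 < α) (hα1 : α < 1)
    (vα : EuclideanSpace ℝ (Fin n) → ℝ)
    (hvα : vα = fun x =>
      (x ⟨n - 1, by omega⟩ * (-Real.log (x ⟨n - 1, by omega⟩)) ^ α - x ⟨n - 1, by omega⟩) *
        ((∑ i ∈ Finset.univ.erase (⟨n - 1, by omega⟩ : Fin n), x i ^ 2) - 1)) :
    ∀ x : EuclideanSpace ℝ (Fin n),
      0 < x ⟨n - 1, by omega⟩ → x ⟨n - 1, by omega⟩ < Real.exp (-1) →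
      hessianDet vα x ≤ (2 : ℝ) ^ n * α * x ⟨n - 1, by omega⟩ ^ (n - 2) *
        (-Real.log (x ⟨n - 1, by omega⟩)) ^ ((n : ℝ) * α - 1) := by
  intro x hx0 hx1
  have hne : n - 1 < n := by omega
  set m : Fin n := ⟨n - 1, hne⟩ with hmdef
  show hessianDet vα x ≤ (2 : ℝ) ^ n * α * x m ^ (n - 2) *
        (-Real.log (x m)) ^ ((n : ℝ) * α - 1)
  have hx0 : 0 < x m := hx0
  have hx1 : x m < Real.exp (-1) := hx1
  have hexp1 : Real.exp (-1) < 1 := by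
    rw [show (1:ℝ) = Real.exp 0 by simp]
    exact Real.exp_lt_exp.mpr (by norm_num)
  have hxm1 : x m < 1 := lt_trans hx1 hexp1
  have hvV : vα = V m α := by rw [hvα]; rfl
  set t : ℝ := x m with htdef
  set S : ℝ := ∑ k ∈ Finset.univ.erase m, x k ^ 2 with hSdef
  have hS : 0 ≤ S := Finset.sum_nonneg fun i _ => sq_nonneg _
  -- positivity of gg
  have hL : 1 < -Real.log t := by
    have h := Real.log_lt_log hx0 hx1
    rw [Real.log_exp] at h
    linarith
  have hLα : 1 < (-Real.log t) ^ α := by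
    rw [one_lt_rpow_iff_of_pos (by linarith)]
    exact Or.inl ⟨hL, hα0⟩
  have hg : 0 < gg α t := by rw [gg]; nlinarith
  have ha : 2 * gg α t ≠ 0 := by positivity
  have hm_top : ∀ i : Fin n, i ≤ m := fun i => by
    rw [Fin.le_def]
    have := i.isLt
    simp only [hmdef]
    omega
  have hM : ∀ i j, hessianMatrix vα x i j =
      if i = m then (if j = m then (S - 1) * gg2 α t else 2 * x j * gg1 α t)
      else if j = m then 2 * x i * gg1 α t
      else if i = j then 2 * gg α t else 0 := by
    intro i j
    show fderiv ℝ (fun y => fderiv ℝ vα y (EuclideanSpace.single j 1)) x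
        (EuclideanSpace.single i 1) = _
    rw [hvV]
    exact hess_entry m α x hx0 hxm1 i j
  have hdet := det_aux hn m hm_top (2 * gg α t) ((S - 1) * gg2 α t) ha
    (fun i => 2 * x i * gg1 α t) (hessianMatrix vα x) hM
  have hsum : ∑ i ∈ Finset.univ.erase m, (2 * x i * gg1 α t) ^ 2
      = 4 * gg1 α t ^ 2 * S := by
    rw [hSdef, Finset.mul_sum]
    exact Finset.sum_congr rfl fun i _ => by ring
  rw [hessianDet, hdet, hsum]
  exact final_ineq hn hα0 hα1 hx0 hx1 S hS
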